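/- arXiv:0806.2582 — 3 statements merged into one kernel-verified Lean document; each statement's English description precedes it below -/
import Mathlib

section
/- Let 𝒟 := {g ∈ L^û(P) : E[u(g)] > -∞}. Let f ∈ L^û(P) with f ≤ 0 P-a.s. and E[u(f)] > -∞. Then f belongs to the interior of 𝒟 with respect to the Luxemburg norm N_û if and only if there exists ε > 0 such that E[u((1+ε)f)] > -∞. -/
/-!
The real function `x ↦ (u x).toReal` is concave on `{u ≠ ⊥}` (also at the left end point `a`
when `u a` is finite), so the Young function satisfies `û(λx) ≤ λ û(x)` for `0 ≤ λ ≤ 1`; hence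
every `f ∈ L^û` has finite Luxemburg norm, and `u → -∞` at `-∞` gives `L^û ⊆ L¹`.

If the `N_û`-ball of radius `r` around `f` lies in `𝒟`, it contains `(1 + ε) f` as soon as
`ε N_û(f) < r`. Conversely, let `u((1 + ε) f)` be integrable and `N_û(g - f) < ε / (1 + ε)`,
witnessed by `c` with `E[û((g - f) / c)] ≤ 1`. Writing `g` as the convex combination of
`(1 + ε) f` and `(1 + ε) / ε · (g - f)` bounds `u(g)` below by an integrable function built from
`u((1 + ε) f)` and `û((g - f) / c)`, while concavity bounds it above by `u(0) + K (1 + |g|)`.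
-/

open MeasureTheory Filter Set Topology
open scoped ENNReal

noncomputable section

/-- The positive part of an extended real number, as an element of `ℝ≥0∞`. -/
def EReal.toENN (x : EReal) : ℝ≥0∞ := if x = ⊤ then ⊤ else ENNReal.ofReal x.toReal

structure IsUtilityFunction (a : EReal) (u : ℝ → EReal) : Prop where
  lt_zero : a < 0
  ne_top : ∀ x : ℝ, u x ≠ ⊤
  eq_bot : ∀ x : ℝ, (x : EReal) < a → u x = ⊥
  ne_bot : ∀ x : ℝ, a < (x : EReal) → u x ≠ ⊥
  mono : Monotone u
  concave : ∀ x y t : ℝ, a < (x : EReal) → a < (y : EReal) → 0 ≤ t → t ≤ 1 →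
    ((t * (u x).toReal + (1 - t) * (u y).toReal : ℝ) : EReal) ≤ u (t * x + (1 - t) * y)
  tendsto_atBot : Tendsto u atBot (𝓝 ⊥)

namespace IsUtilityFunction

variable {a : EReal} {u : ℝ → EReal}

lemma ne_bot_zero (hu : IsUtilityFunction a u) : u 0 ≠ ⊥ :=
  hu.ne_bot 0 (mod_cast hu.lt_zero)

lemma le_of_ne_bot (hu : IsUtilityFunction a u) {x : ℝ} (hx : u x ≠ ⊥) : a ≤ x :=
  not_lt.1 fun h => hx (hu.eq_bot x h)

lemma ne_bot_of_le (hu : IsUtilityFunction a u) {x y : ℝ} (hx : u x ≠ ⊥) (hxy : x ≤ y) :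
    u y ≠ ⊥ :=
  fun hy => hx (le_bot_iff.1 (hy ▸ hu.mono hxy))

lemma toReal_mono (hu : IsUtilityFunction a u) {x y : ℝ} (hx : u x ≠ ⊥) (hxy : x ≤ y) :
    (u x).toReal ≤ (u y).toReal :=
  EReal.toReal_le_toReal (hu.mono hxy) hx (hu.ne_top y)

lemma toReal_concave (hu : IsUtilityFunction a u) {x y t : ℝ} (hx : a < x) (hy : a < y)
    (ht₀ : 0 ≤ t) (ht₁ : t ≤ 1) :
    t * (u x).toReal + (1 - t) * (u y).toReal ≤ (u (t * x + (1 - t) * y)).toReal :=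
  (EReal.toReal_coe _).symm.trans_le <|
    EReal.toReal_le_toReal (hu.concave x y t hx hy ht₀ ht₁) (EReal.coe_ne_bot _) (hu.ne_top _)

/-- Concavity also holds at the left end `x = a` of the domain: approximate the chord `[x, y]`
by the chords `[x', y]`, `x' ↓ x`, through the same point, using `u x ≤ u x'`. -/
lemma toReal_concave_of_ne_bot (hu : IsUtilityFunction a u) {x y t : ℝ} (hx : u x ≠ ⊥)
    (hy : a < y) (ht₀ : 0 ≤ t) (ht₁ : t ≤ 1) :
    t * (u x).toReal + (1 - t) * (u y).toReal ≤ (u (t * x + (1 - t) * y)).toReal := by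
  rcases (hu.le_of_ne_bot hx).lt_or_eq with hax | hax
  · exact hu.toReal_concave hax hy ht₀ ht₁
  rcases ht₁.lt_or_eq with ht₁ | rfl
  swap
  · simp
  have hxy : x < y := by exact_mod_cast hax ▸ hy
  set z := t * x + (1 - t) * y
  have hxz : x < z := by nlinarith
  have hzy : z ≤ y := by nlinarith
  set w : ℝ → ℝ := fun x' => (y - z) / (y - x')
  have hw : w x = t := by
    simp only [w, z]
    field_simp [(sub_pos.2 hxy).ne']
    ring
  have hlim : Tendsto (fun x' => w x' * (u x).toReal + (1 - w x') * (u y).toReal) (𝓝[>] x)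
      (𝓝 (t * (u x).toReal + (1 - t) * (u y).toReal)) := by
    rw [← hw]
    refine ContinuousAt.tendsto ?_ |>.mono_left nhdsWithin_le_nhds
    have : ContinuousAt w x :=
      continuousAt_const.div (continuousAt_const.sub continuousAt_id) (sub_pos.2 hxy).ne'
    fun_prop
  refine le_of_tendsto hlim ?_
  filter_upwards [Ioo_mem_nhdsGT hxz] with x' ⟨hxx', hx'z⟩
  have hw₀ : 0 ≤ w x' := div_nonneg (by nlinarith) (by linarith)
  have hw₁ : w x' ≤ 1 := (div_le_one (by linarith)).2 (by linarith)
  have hchord := hu.toReal_concave (hax ▸ EReal.coe_lt_coe_iff.2 hxx') hy hw₀ hw₁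
  have hz : w x' * x' + (1 - w x') * y = z := by
    simp only [w]
    field_simp [(show y - x' ≠ 0 by linarith)]
    ring
  rw [hz] at hchord
  nlinarith [hu.toReal_mono hx hxx'.le]

theorem concaveOn (hu : IsUtilityFunction a u) :
    ConcaveOn ℝ {x | u x ≠ ⊥} fun x => (u x).toReal := by
  refine ⟨(IsUpperSet.ordConnected fun x y hxy hx => hu.ne_bot_of_le hx hxy).convex, ?_⟩
  intro x hx y hy s t hs ht hst
  obtain rfl : t = 1 - s := by linarith
  simp only [smul_eq_mul]
  rcases (hu.le_of_ne_bot hy).lt_or_eq with hay | hay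
  · exact hu.toReal_concave_of_ne_bot hx hay hs (by linarith)
  rcases (hu.le_of_ne_bot hx).lt_or_eq with hax | hax
  · have := hu.toReal_concave_of_ne_bot hy hax (t := 1 - s) (by linarith) (by linarith)
    rw [sub_sub_cancel, add_comm (_ * y)] at this
    linarith
  · obtain rfl : x = y := by exact_mod_cast hax.symm.trans hay
    rw [← add_mul, ← add_mul, add_sub_cancel, one_mul, one_mul]

lemma exists_toReal_le (hu : IsUtilityFunction a u) :
    ∃ K : ℝ, 0 ≤ K ∧ ∀ x : ℝ, u x ≠ ⊥ → (u x).toReal ≤ (u 0).toReal + K * (1 + |x|) := by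
  have h0 := hu.ne_bot_zero
  refine ⟨(u 1).toReal - (u 0).toReal, sub_nonneg.2 (hu.toReal_mono h0 zero_le_one),
    fun x hx => ?_⟩
  rcases le_or_gt x 1 with hx₁ | hx₁
  · nlinarith [hu.toReal_mono hx hx₁, hu.toReal_mono h0 zero_le_one, abs_nonneg x]
  · have hchord := hu.toReal_concave_of_ne_bot hx (y := 0) (t := 1 / x) (mod_cast hu.lt_zero)
      (by positivity) ((div_le_one (by linarith)).2 hx₁.le)
    rw [show 1 / x * x + (1 - 1 / x) * 0 = 1 by field_simp; ring] at hchord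
    rw [abs_of_pos (by linarith)]
    have h := mul_le_mul_of_nonneg_left hchord (by linarith : (0 : ℝ) ≤ x)
    field_simp at h
    nlinarith [hu.toReal_mono h0 zero_le_one]

/-- `y` is the convex combination of `(1 + ε) x` and `k = (1 + ε) / ε * (y - x)` with weights
`1 / (1 + ε)` and `ε / (1 + ε)`, and `k ≥ -|(y - x) / c|` once `c ≤ ε / (1 + ε)`. -/
lemma mix_le_toReal (hu : IsUtilityFunction a u) {ε c x y : ℝ} (hε : 0 < ε) (hc : 0 < c)
    (hcε : c ≤ ε / (1 + ε)) (hx : u ((1 + ε) * x) ≠ ⊥) (hyx : u (-|(y - x) / c|) ≠ ⊥) :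
    u y ≠ ⊥ ∧ (u ((1 + ε) * x)).toReal / (1 + ε) + ε / (1 + ε) * (u (-|(y - x) / c|)).toReal
      ≤ (u y).toReal := by
  set k := (1 + ε) / ε * (y - x)
  have hk : -|(y - x) / c| ≤ k := by
    refine le_trans (neg_le_neg ?_) (neg_abs_le k)
    rw [abs_mul, abs_div (y - x), abs_of_pos hc, abs_of_pos (by positivity : 0 < (1 + ε) / ε),
      le_div_iff₀ hc]
    rw [le_div_iff₀ (by positivity)] at hcε
    have : (1 + ε) / ε * c ≤ 1 := by rw [div_mul_eq_mul_div, div_le_one hε]; linarith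
    nlinarith [abs_nonneg (y - x)]
  have hkb : u k ≠ ⊥ := hu.ne_bot_of_le hyx hk
  have hy : (1 + ε)⁻¹ • ((1 + ε) * x) + (ε / (1 + ε)) • k = y := by
    simp only [smul_eq_mul, k]
    field_simp
    ring
  have hw : (1 + ε)⁻¹ + ε / (1 + ε) = 1 := by field_simp
  have hmix := hu.concaveOn.2 hx hkb (by positivity) (by positivity) hw
  rw [hy, smul_eq_mul, smul_eq_mul] at hmix
  refine ⟨hy ▸ hu.concaveOn.1 hx hkb (by positivity) (by positivity) hw, ?_⟩
  have := hu.toReal_mono hyx hk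
  rw [div_eq_inv_mul]
  nlinarith

end IsUtilityFunction

def youngFunction (u : ℝ → EReal) (x : ℝ) : ℝ≥0∞ := (u 0 - u (-|x|)).toENN

section YoungFunction

variable {u : ℝ → EReal}

lemma youngFunction_le_of_abs_le (hu : Monotone u) {x y : ℝ} (h : |x| ≤ |y|) :
    youngFunction u x ≤ youngFunction u y :=
  EReal.toENNReal_le_toENNReal (EReal.sub_le_sub le_rfl (hu (neg_le_neg h)))

lemma measurable_youngFunction (hu : Monotone u) : Measurable (youngFunction u) :=
  (Monotone.measurable (f := fun t : ℝ => (u 0 - u (-t)).toENNReal) fun _ _ hst =>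
    EReal.toENNReal_le_toENNReal (EReal.sub_le_sub le_rfl (hu (neg_le_neg hst)))).comp
    measurable_abs

lemma youngFunction_eq_top (h0 : u 0 ≠ ⊥) {x : ℝ} (hx : u (-|x|) = ⊥) :
    youngFunction u x = ⊤ := by
  simp [youngFunction, EReal.toENN, hx, EReal.sub_bot h0]

lemma youngFunction_eq_ofReal (h0 : u 0 ≠ ⊥) (htop : ∀ x, u x ≠ ⊤) {x : ℝ}
    (hx : u (-|x|) ≠ ⊥) :
    youngFunction u x = ENNReal.ofReal ((u 0).toReal - (u (-|x|)).toReal) := by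
  rw [youngFunction, ← EReal.coe_toReal (htop 0) h0, ← EReal.coe_toReal (htop _) hx,
    ← EReal.coe_sub]
  exact EReal.real_coe_toENNReal _

end YoungFunction

namespace IsUtilityFunction

variable {a : EReal} {u : ℝ → EReal}

lemma youngFunction_lt_top_iff (hu : IsUtilityFunction a u) {x : ℝ} :
    youngFunction u x < ⊤ ↔ u (-|x|) ≠ ⊥ := by
  refine ⟨fun h hx => h.ne (youngFunction_eq_top hu.ne_bot_zero hx), fun hx => ?_⟩
  rw [youngFunction_eq_ofReal hu.ne_bot_zero hu.ne_top hx]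
  exact ENNReal.ofReal_lt_top

lemma toReal_youngFunction (hu : IsUtilityFunction a u) {x : ℝ} (hx : u (-|x|) ≠ ⊥) :
    (youngFunction u x).toReal = (u 0).toReal - (u (-|x|)).toReal := by
  rw [youngFunction_eq_ofReal hu.ne_bot_zero hu.ne_top hx, ENNReal.toReal_ofReal
    (sub_nonneg.2 (hu.toReal_mono hx (neg_nonpos.2 (abs_nonneg x))))]

lemma youngFunction_mul_le (hu : IsUtilityFunction a u) (c x : ℝ) (hc₀ : 0 ≤ c) (hc₁ : c ≤ 1) :
    youngFunction u (c * x) ≤ ENNReal.ofReal c * youngFunction u x := by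
  have h0 := hu.ne_bot_zero
  rcases hc₀.eq_or_lt with rfl | hc
  · rw [zero_mul, youngFunction_eq_ofReal h0 hu.ne_top (by simpa using h0)]
    simp
  by_cases hx : u (-|x|) = ⊥
  · rw [youngFunction_eq_top h0 hx, ENNReal.mul_top (by simpa using hc)]
    exact le_top
  have hcx : -|c * x| = c * -|x| + (1 - c) * 0 := by rw [abs_mul, abs_of_pos hc]; ring
  have hcxb : u (-|c * x|) ≠ ⊥ :=
    hu.ne_bot_of_le hx (by rw [hcx]; nlinarith [abs_nonneg x])
  rw [youngFunction_eq_ofReal h0 hu.ne_top hcxb, youngFunction_eq_ofReal h0 hu.ne_top hx,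
    ← ENNReal.ofReal_mul hc.le]
  refine ENNReal.ofReal_le_ofReal ?_
  have hchord := hu.toReal_concave_of_ne_bot hx (y := 0) (mod_cast hu.lt_zero) hc.le hc₁
  rw [← hcx] at hchord
  linarith

lemma exists_abs_le_mul_one_add_youngFunction (hu : IsUtilityFunction a u) :
    ∃ C : ℝ, 0 < C ∧ ∀ s : ℝ,
      ENNReal.ofReal |s| ≤ ENNReal.ofReal C * (1 + youngFunction u s) := by
  have h0 := hu.ne_bot_zero
  have hlt : ⊥ < u 0 - 1 := by
    rw [← EReal.coe_toReal (hu.ne_top 0) h0, ← EReal.coe_one, ← EReal.coe_sub]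
    exact EReal.bot_lt_coe _
  obtain ⟨y, hy⟩ := eventually_atBot.1 (hu.tendsto_atBot.eventually (gt_mem_nhds hlt))
  set x₀ := |y| + 1
  have hx₀ : 0 < x₀ := by positivity
  have hΦx₀ : 1 ≤ youngFunction u x₀ := by
    by_cases hb : u (-|x₀|) = ⊥
    · rw [youngFunction_eq_top h0 hb]
      exact le_top
    rw [youngFunction_eq_ofReal h0 hu.ne_top hb, ENNReal.one_le_ofReal]
    have h := hy (-|x₀|) (by rw [abs_of_pos hx₀]; linarith [neg_abs_le y])
    rw [← EReal.coe_toReal (hu.ne_top _) hb, ← EReal.coe_toReal (hu.ne_top 0) h0,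
      ← EReal.coe_one, ← EReal.coe_sub, EReal.coe_lt_coe_iff] at h
    linarith
  refine ⟨x₀, hx₀, fun s => ?_⟩
  rcases le_or_gt |s| x₀ with hs | hs
  · calc ENNReal.ofReal |s| ≤ ENNReal.ofReal x₀ := ENNReal.ofReal_le_ofReal hs
      _ ≤ ENNReal.ofReal x₀ * (1 + youngFunction u s) := le_mul_of_one_le_right' le_self_add
  have hs₀ : 0 < |s| := hx₀.trans hs
  have habs : |x₀| ≤ |x₀ / |s| * s| := by
    rw [abs_mul, abs_div, abs_abs, div_mul_cancel₀ _ hs₀.ne']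
  calc ENNReal.ofReal |s| = ENNReal.ofReal |s| * 1 := (mul_one _).symm
    _ ≤ ENNReal.ofReal |s| * youngFunction u (x₀ / |s| * s) := by
        gcongr
        exact hΦx₀.trans (youngFunction_le_of_abs_le hu.mono habs)
    _ ≤ ENNReal.ofReal |s| * (ENNReal.ofReal (x₀ / |s|) * youngFunction u s) := by
        gcongr
        exact hu.youngFunction_mul_le _ _ (by positivity) ((div_le_one hs₀).2 hs.le)
    _ = ENNReal.ofReal x₀ * youngFunction u s := by
        rw [← mul_assoc, ← ENNReal.ofReal_mul (abs_nonneg s), mul_div_cancel₀ _ hs₀.ne']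
    _ ≤ ENNReal.ofReal x₀ * (1 + youngFunction u s) := by gcongr; exact le_add_self

end IsUtilityFunction

def orliczSpace {Ω : Type*} [MeasurableSpace Ω] (P : Measure Ω) (Φ : ℝ → ℝ≥0∞) :
    Set (Ω → ℝ) :=
  {f | Measurable f ∧ ∃ α : ℝ, 0 < α ∧ ∫⁻ ω, Φ (α * f ω) ∂P < ⊤}

def luxemburgNorm {Ω : Type*} [MeasurableSpace Ω] (P : Measure Ω) (Φ : ℝ → ℝ≥0∞)
    (f : Ω → ℝ) : ℝ :=
  sInf {c : ℝ | 0 < c ∧ ∫⁻ ω, Φ (f ω / c) ∂P ≤ 1}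

section Orlicz

variable {Ω : Type*} [MeasurableSpace Ω] {P : Measure Ω} {Φ : ℝ → ℝ≥0∞} {f g : Ω → ℝ}

lemma const_mul_mem_orliczSpace (hf : f ∈ orliczSpace P Φ) {c : ℝ} (hc : 0 < c) :
    (fun ω => c * f ω) ∈ orliczSpace P Φ := by
  obtain ⟨hfm, α, hα, hfin⟩ := hf
  refine ⟨measurable_const.mul hfm, α / c, by positivity, ?_⟩
  have hcancel : ∀ ω, α / c * (c * f ω) = α * f ω := fun ω => by field_simp
  simpa only [hcancel] using hfin

lemma sub_mem_orliczSpace (hΦm : Measurable Φ) (hΦ : ∀ x y, |x| ≤ |y| → Φ x ≤ Φ y)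
    (hf : f ∈ orliczSpace P Φ) (hg : g ∈ orliczSpace P Φ) : f - g ∈ orliczSpace P Φ := by
  obtain ⟨hfm, α, hα, hfin⟩ := hf
  obtain ⟨hgm, β, hβ, hgin⟩ := hg
  set γ := min α β
  have hle : ∀ ω, Φ (γ / 2 * (f - g) ω) ≤ Φ (α * f ω) + Φ (β * g ω) := by
    intro ω
    have hγ : 0 < γ := lt_min hα hβ
    have key : |γ / 2 * (f ω - g ω)| ≤ max |α * f ω| |β * g ω| := by
      rw [abs_mul, abs_mul, abs_mul, abs_of_pos (half_pos hγ), abs_of_pos hα, abs_of_pos hβ]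
      nlinarith [abs_sub (f ω) (g ω), le_max_left (α * |f ω|) (β * |g ω|),
        le_max_right (α * |f ω|) (β * |g ω|), min_le_left α β, min_le_right α β,
        abs_nonneg (f ω), abs_nonneg (g ω)]
    rcases le_total |α * f ω| |β * g ω| with h | h
    · exact (hΦ _ _ (key.trans (max_eq_right h).le)).trans le_add_self
    · exact (hΦ _ _ (key.trans (max_eq_left h).le)).trans le_self_add
  refine ⟨hfm.sub hgm, γ / 2, by positivity, ?_⟩
  calc ∫⁻ ω, Φ (γ / 2 * (f - g) ω) ∂P ≤ ∫⁻ ω, Φ (α * f ω) + Φ (β * g ω) ∂P := lintegral_mono hle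
    _ = (∫⁻ ω, Φ (α * f ω) ∂P) + ∫⁻ ω, Φ (β * g ω) ∂P :=
        lintegral_add_left (hΦm.comp (measurable_const.mul hfm)) _
    _ < ⊤ := ENNReal.add_lt_top.2 ⟨hfin, hgin⟩

lemma integrable_of_mem_orliczSpace [IsFiniteMeasure P] {C : ℝ}
    (hΦ : ∀ s, ENNReal.ofReal |s| ≤ ENNReal.ofReal C * (1 + Φ s)) (hf : f ∈ orliczSpace P Φ) :
    Integrable f P := by
  obtain ⟨hfm, α, hα, hfin⟩ := hf
  refine (integrable_const_mul_iff (isUnit_iff_ne_zero.2 hα.ne') f).1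
    ⟨(measurable_const.mul hfm).aestronglyMeasurable, (hasFiniteIntegral_iff_norm _).2 ?_⟩
  calc ∫⁻ ω, ENNReal.ofReal ‖α * f ω‖ ∂P
      ≤ ∫⁻ ω, ENNReal.ofReal C * (1 + Φ (α * f ω)) ∂P := lintegral_mono fun ω => hΦ _
    _ = ENNReal.ofReal C * (P univ + ∫⁻ ω, Φ (α * f ω) ∂P) := by
        rw [lintegral_const_mul' _ _ ENNReal.ofReal_ne_top, lintegral_add_left measurable_const,
          lintegral_const, one_mul]
    _ < ⊤ := ENNReal.mul_lt_top ENNReal.ofReal_lt_top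
        (ENNReal.add_lt_top.2 ⟨measure_lt_top _ _, hfin⟩)

lemma luxemburgNorm_le {c : ℝ} (hc : 0 < c) (h : ∫⁻ ω, Φ (f ω / c) ∂P ≤ 1) :
    luxemburgNorm P Φ f ≤ c :=
  csInf_le ⟨0, fun _ hc => hc.1.le⟩ ⟨hc, h⟩

lemma exists_lintegral_div_le_one
    (hΦ : ∀ c x : ℝ, 0 ≤ c → c ≤ 1 → Φ (c * x) ≤ ENNReal.ofReal c * Φ x)
    (hf : f ∈ orliczSpace P Φ) : ∃ c : ℝ, 0 < c ∧ ∫⁻ ω, Φ (f ω / c) ∂P ≤ 1 := by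
  obtain ⟨-, α, hα, hfin⟩ := hf
  set I := (∫⁻ ω, Φ (α * f ω) ∂P).toReal
  have hI : 0 ≤ I := ENNReal.toReal_nonneg
  refine ⟨(1 + I) / α, by positivity, ?_⟩
  have hdiv : ∀ ω, f ω / ((1 + I) / α) = (1 + I)⁻¹ * (α * f ω) := fun ω => by field_simp
  calc ∫⁻ ω, Φ (f ω / ((1 + I) / α)) ∂P
      ≤ ∫⁻ ω, ENNReal.ofReal (1 + I)⁻¹ * Φ (α * f ω) ∂P := lintegral_mono fun ω => by
        rw [hdiv]
        exact hΦ _ _ (by positivity) (inv_le_one_of_one_le₀ (by linarith))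
    _ = ENNReal.ofReal ((1 + I)⁻¹ * I) := by
        rw [lintegral_const_mul' _ _ ENNReal.ofReal_ne_top, ENNReal.ofReal_mul (by positivity),
          ENNReal.ofReal_toReal hfin.ne]
    _ ≤ 1 := ENNReal.ofReal_le_one.2 (by rw [inv_mul_le_iff₀ (by positivity)]; linarith)

lemma exists_lt_of_luxemburgNorm_lt
    (hΦ : ∀ c x : ℝ, 0 ≤ c → c ≤ 1 → Φ (c * x) ≤ ENNReal.ofReal c * Φ x)
    (hf : f ∈ orliczSpace P Φ) {r : ℝ} (h : luxemburgNorm P Φ f < r) :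
    ∃ c : ℝ, 0 < c ∧ c < r ∧ ∫⁻ ω, Φ (f ω / c) ∂P ≤ 1 :=
  let ⟨c, ⟨hc, hint⟩, hcr⟩ := exists_lt_of_csInf_lt (exists_lintegral_div_le_one hΦ hf) h
  ⟨c, hc, hcr, hint⟩

theorem exists_one_add_mul_mem_of_ball_subset {S : Set (Ω → ℝ)}
    (hΦ : ∀ c x : ℝ, 0 ≤ c → c ≤ 1 → Φ (c * x) ≤ ENNReal.ofReal c * Φ x)
    (hf : f ∈ orliczSpace P Φ) {r : ℝ} (hr : 0 < r)
    (hball : ∀ g ∈ orliczSpace P Φ, luxemburgNorm P Φ (g - f) < r → g ∈ S) :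
    ∃ ε : ℝ, 0 < ε ∧ (fun ω => (1 + ε) * f ω) ∈ S := by
  obtain ⟨c, hc, hint⟩ := exists_lintegral_div_le_one hΦ hf
  refine ⟨r / (2 * c), by positivity,
    hball _ (const_mul_mem_orliczSpace hf (by positivity)) ?_⟩
  refine (luxemburgNorm_le (c := r / 2) (by positivity) ?_).trans_lt (half_lt_self hr)
  convert hint using 4 with ω
  simp only [Pi.sub_apply]
  field_simp
  ring

end Orlicz

theorem IsUtilityFunction.exists_integrable_of_luxemburgNorm_sub_lt {Ω : Type*}
    [MeasurableSpace Ω] {P : Measure Ω} [IsFiniteMeasure P] {a : EReal} {u : ℝ → EReal}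
    (hu : IsUtilityFunction a u) {f g φ : Ω → ℝ} {ε : ℝ}
    (hf : f ∈ orliczSpace P (youngFunction u)) (hg : g ∈ orliczSpace P (youngFunction u))
    (hε : 0 < ε) (hφ : Integrable φ P) (hfφ : ∀ᵐ ω ∂P, u ((1 + ε) * f ω) = φ ω)
    (hgf : luxemburgNorm P (youngFunction u) (g - f) < ε / (1 + ε)) :
    ∃ ψ : Ω → ℝ, Integrable ψ P ∧ ∀ᵐ ω ∂P, u (g ω) = ψ ω := by
  have hΦm := measurable_youngFunction hu.mono
  obtain ⟨c, hc, hcε, hint⟩ := exists_lt_of_luxemburgNorm_lt hu.youngFunction_mul_le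
    (sub_mem_orliczSpace hΦm (fun _ _ => youngFunction_le_of_abs_le hu.mono) hg hf) hgf
  set θ : Ω → ℝ := fun ω => (youngFunction u ((g - f) ω / c)).toReal
  have hθm : Measurable fun ω => youngFunction u ((g - f) ω / c) :=
    hΦm.comp ((hg.1.sub hf.1).div_const c)
  have hfin : ∫⁻ ω, youngFunction u ((g - f) ω / c) ∂P ≠ ⊤ :=
    ne_top_of_le_ne_top ENNReal.one_ne_top hint
  have hθ : Integrable θ P := integrable_toReal_of_lintegral_ne_top hθm.aemeasurable hfin
  obtain ⟨K, -, hupper⟩ := hu.exists_toReal_le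
  obtain ⟨C, -, hC⟩ := hu.exists_abs_le_mul_one_add_youngFunction
  have hgint : Integrable g P := integrable_of_mem_orliczSpace hC hg
  have hbounds : ∀ᵐ ω ∂P, u (g ω) ≠ ⊥ ∧
      φ ω / (1 + ε) + ε / (1 + ε) * ((u 0).toReal - θ ω) ≤ (u (g ω)).toReal ∧
      (u (g ω)).toReal ≤ (u 0).toReal + K * (1 + |g ω|) := by
    filter_upwards [hfφ, ae_lt_top hθm hfin] with ω hω hθω
    have hb := hu.youngFunction_lt_top_iff.1 hθω
    obtain ⟨hgb, hmix⟩ := hu.mix_le_toReal hε hc hcε.le (hω ▸ EReal.coe_ne_bot _) hb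
    refine ⟨hgb, ?_, hupper _ hgb⟩
    rw [hω, EReal.toReal_coe] at hmix
    rwa [show θ ω = _ from hu.toReal_youngFunction hb, sub_sub_cancel]
  refine ⟨fun ω => (u (g ω)).toReal, integrable_of_le_of_le
    (hu.mono.measurable.comp hg.1).ereal_toReal.aestronglyMeasurable
    (hbounds.mono fun _ h => h.2.1) (hbounds.mono fun _ h => h.2.2)
    ((hφ.div_const _).add (((integrable_const _).sub hθ).const_mul _))
    ((integrable_const _).add ((integrable_const 1).add hgint.abs |>.const_mul K)),
    hbounds.mono fun _ h => (EReal.coe_toReal (hu.ne_top _) h.1).symm⟩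

theorem statement7_general
    {Ω : Type*} [MeasurableSpace Ω] (P : Measure Ω) [IsProbabilityMeasure P]
    (a : EReal) (ha : a < 0)
    (u : ℝ → EReal)
    (hu_ne_top : ∀ x : ℝ, u x ≠ ⊤)
    (hu_bot : ∀ x : ℝ, (x : EReal) < a → u x = ⊥)
    (hu_fin : ∀ x : ℝ, a < (x : EReal) → u x ≠ ⊥)
    (hu_mono : Monotone u)
    (hu_conc : ∀ x y t : ℝ, a < (x : EReal) → a < (y : EReal) → 0 ≤ t → t ≤ 1 →
      ((t * (u x).toReal + (1 - t) * (u y).toReal : ℝ) : EReal) ≤ u (t * x + (1 - t) * y))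
    (hu_lim : Tendsto u atBot (𝓝 ⊥))
    -- the Young function `û(x) = -u(-|x|) + u(0)`
    (uhat : ℝ → ℝ≥0∞)
    (huhat : ∀ x : ℝ, uhat x = (u 0 - u (-|x|)).toENN)
    -- the Luxemburg norm
    (Nu : (Ω → ℝ) → ℝ)
    (hNu : ∀ f : Ω → ℝ, Nu f = sInf {c : ℝ | 0 < c ∧ ∫⁻ ω, uhat (f ω / c) ∂P ≤ 1})
    -- the Orlicz space `L^û(P)`
    (LU : Set (Ω → ℝ))
    (hLU : ∀ f : Ω → ℝ, f ∈ LU ↔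
      Measurable f ∧ ∃ α : ℝ, 0 < α ∧ ∫⁻ ω, uhat (α * f ω) ∂P < ⊤)
    -- the proper domain `𝒟 = {g ∈ L^û : E[u(g)] > -∞}` of `I_u`
    (D : Set (Ω → ℝ))
    (hD : ∀ f : Ω → ℝ, f ∈ D ↔ f ∈ LU ∧
      ∃ g : Ω → ℝ, Integrable g P ∧ ∀ᵐ ω ∂P, u (f ω) = (g ω : EReal))
    (f : Ω → ℝ) (hfLU : f ∈ LU) :
    (∃ r : ℝ, 0 < r ∧ ∀ g ∈ LU, Nu (g - f) < r → g ∈ D) ↔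
      ∃ ε : ℝ, 0 < ε ∧ (fun ω => (1 + ε) * f ω) ∈ D := by
  have hu : IsUtilityFunction a u := ⟨ha, hu_ne_top, hu_bot, hu_fin, hu_mono, hu_conc, hu_lim⟩
  obtain rfl : uhat = youngFunction u := funext huhat
  obtain rfl : Nu = luxemburgNorm P (youngFunction u) := funext hNu
  obtain rfl : LU = orliczSpace P (youngFunction u) := Set.ext hLU
  constructor
  · rintro ⟨r, hr, hball⟩
    exact exists_one_add_mul_mem_of_ball_subset hu.youngFunction_mul_le hfLU hr hball
  · rintro ⟨ε, hε, hεD⟩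
    obtain ⟨-, φ, hφ, hfφ⟩ := (hD _).1 hεD
    exact ⟨ε / (1 + ε), by positivity, fun g hg hgf =>
      (hD g).2 ⟨hg, hu.exists_integrable_of_luxemburgNorm_sub_lt hfLU hg hε hφ hfφ hgf⟩⟩

/-- Lemma 30.  Let `𝒟 = {g ∈ L^û : E[u(g)] > -∞}` and let `f ∈ L^û` with
`f ≤ 0` `P`-a.s. and `E[u(f)] > -∞`.  Then `f` belongs to the `N_û`-interior of `𝒟` iff
there exists `ε > 0` with `E[u((1+ε)f)] > -∞`. -/
theorem statement7
    {Ω : Type*} [MeasurableSpace Ω] (P : Measure Ω) [IsProbabilityMeasure P]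
    (a : EReal) (ha : a < 0)
    (u : ℝ → EReal)
    (hu_ne_top : ∀ x : ℝ, u x ≠ ⊤)
    (hu_bot : ∀ x : ℝ, (x : EReal) < a → u x = ⊥)
    (hu_fin : ∀ x : ℝ, a < (x : EReal) → u x ≠ ⊥)
    (hu_mono : Monotone u)
    (hu_conc : ∀ x y t : ℝ, a < (x : EReal) → a < (y : EReal) → 0 ≤ t → t ≤ 1 →
      ((t * (u x).toReal + (1 - t) * (u y).toReal : ℝ) : EReal) ≤ u (t * x + (1 - t) * y))
    (hu_lim : Tendsto u atBot (𝓝 ⊥))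
    -- the Young function `û(x) = -u(-|x|) + u(0)`
    (uhat : ℝ → ℝ≥0∞)
    (huhat : ∀ x : ℝ, uhat x = (u 0 - u (-|x|)).toENN)
    -- the Luxemburg norm
    (Nu : (Ω → ℝ) → ℝ)
    (hNu : ∀ f : Ω → ℝ, Nu f = sInf {c : ℝ | 0 < c ∧ ∫⁻ ω, uhat (f ω / c) ∂P ≤ 1})
    -- the Orlicz space `L^û(P)`
    (LU : Set (Ω → ℝ))
    (hLU : ∀ f : Ω → ℝ, f ∈ LU ↔
      Measurable f ∧ ∃ α : ℝ, 0 < α ∧ ∫⁻ ω, uhat (α * f ω) ∂P < ⊤)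
    -- the proper domain `𝒟 = {g ∈ L^û : E[u(g)] > -∞}` of `I_u`
    (D : Set (Ω → ℝ))
    (hD : ∀ f : Ω → ℝ, f ∈ D ↔ f ∈ LU ∧
      ∃ g : Ω → ℝ, Integrable g P ∧ ∀ᵐ ω ∂P, u (f ω) = (g ω : EReal))
    (f : Ω → ℝ) (hfLU : f ∈ LU) (hf_le : ∀ᵐ ω ∂P, f ω ≤ 0) (hfD : f ∈ D) :
    (∃ r : ℝ, 0 < r ∧ ∀ g ∈ LU, Nu (g - f) < r → g ∈ D) ↔
      ∃ ε : ℝ, 0 < ε ∧ (fun ω => (1 + ε) * f ω) ∈ D :=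
  statement7_general P a ha u hu_ne_top hu_bot hu_fin hu_mono hu_conc hu_lim uhat huhat Nu hNu LU
    hLU D hD f hfLU

end
end

section
/- Assume (A1) and (A2), and suppose a ∈ (-∞, 0) is finite. Let η ∈ L⁰(P) with η ≥ 0, E[Φ(η)] < ∞ and 0 < E[η] ≤ 1. If c ≤ a·E[η], then the infimum inf_{λ>0} { λc + E[Φ(λη)] } is not attained at any λ > 0; moreover if c < a·E[η], then this infimum equals -∞. -/
/-!
Put `ψ(y) = Φ(y) + a y`. For `0 < y₁ < y₂` the supremum defining `Φ(y₂)` is attained at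
`x = (u')⁻¹(y₂) > a`, while `Φ(y₁) ≥ u(x) - x y₁`; hence `ψ(y₁) - ψ(y₂) ≥ (x - a)(y₂ - y₁) > 0`.
Integrating against `η` (which is positive with positive probability), `λ ↦ E[Φ(λη)] + aλE[η]`
is strictly decreasing, and
`λc + E[Φ(λη)] = (E[Φ(λη)] + aλE[η]) + λ(c - aE[η])`
is therefore strictly decreasing if `c ≤ aE[η]` and tends to `-∞` if `c < aE[η]`.
The monotonicity of `ψ` also makes `Φ(λη)` measurable, and Fenchel's inequality
`Φ(y) ≥ u(a + 1) - (a + 1) y` bounds it below by an integrable function, so `ewp` is an ordinary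
integral.
-/

open MeasureTheory Filter Set Topology
open scoped ENNReal

noncomputable section

/-- Extended-real-valued expectation: the lower integral of the positive part minus the lower
integral of the negative part. -/
def ewp {Ω : Type*} [MeasurableSpace Ω] (P : Measure Ω) (H : Ω → EReal) : EReal :=
  ((∫⁻ ω, (H ω).toENN ∂P : ℝ≥0∞) : EReal) - ((∫⁻ ω, (-(H ω)).toENN ∂P : ℝ≥0∞) : EReal)

section ExtendedExpectation

variable {Ω : Type*} [MeasurableSpace Ω] {P : Measure Ω}

theorem ae_ne_top_of_lintegral_toENN_lt_top {H : Ω → EReal} (hH : Measurable H)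
    (hfin : ∫⁻ ω, (H ω).toENN ∂P < ⊤) : ∀ᵐ ω ∂P, H ω ≠ ⊤ := by
  filter_upwards [ae_lt_top hH.ereal_toENNReal hfin.ne] with ω hω htop
  simp [htop] at hω

theorem ewp_eq_integral {H : Ω → EReal} {f : Ω → ℝ} (hHf : ∀ᵐ ω ∂P, H ω = f ω)
    (hf : Integrable f P) : ewp P H = ∫ ω, f ω ∂P := by
  have hpos : ∫⁻ ω, (H ω).toENN ∂P = ∫⁻ ω, ENNReal.ofReal (f ω) ∂P :=
    lintegral_congr_ae <| hHf.mono fun ω h => by simp [h, EReal.toENN]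
  have hneg : ∫⁻ ω, (-(H ω)).toENN ∂P = ∫⁻ ω, ENNReal.ofReal (-f ω) ∂P :=
    lintegral_congr_ae <| hHf.mono fun ω h => by simp [h, EReal.toENN, ← EReal.coe_neg]
  have hneg_fin : ∫⁻ ω, ENNReal.ofReal (-f ω) ∂P ≠ ⊤ := hf.neg.lintegral_lt_top.ne
  rw [ewp, hpos, hneg, integral_eq_lintegral_pos_part_sub_lintegral_neg_part hf, EReal.coe_sub,
    EReal.coe_ennreal_toReal hf.lintegral_lt_top.ne, EReal.coe_ennreal_toReal hneg_fin]

theorem integrable_of_ae_le_of_lintegral_ofReal_lt_top {f g : Ω → ℝ}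
    (hf : AEStronglyMeasurable f P) (hg : Integrable g P) (hgf : ∀ᵐ ω ∂P, g ω ≤ f ω)
    (hfin : ∫⁻ ω, ENNReal.ofReal (f ω) ∂P < ⊤) : Integrable f P := by
  refine ⟨hf, ?_⟩
  have hle : ∀ᵐ ω ∂P, ‖f ω‖ₑ ≤ ENNReal.ofReal (f ω) + ‖g ω‖ₑ := by
    filter_upwards [hgf] with ω hω
    rw [Real.enorm_eq_ofReal_abs, Real.enorm_eq_ofReal_abs]
    rcases le_total 0 (f ω) with h | h
    · rw [abs_of_nonneg h]
      exact le_self_add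
    · exact (ENNReal.ofReal_le_ofReal (by rw [abs_of_nonpos h]; linarith [neg_abs_le (g ω)])).trans
        le_add_self
  calc ∫⁻ ω, ‖f ω‖ₑ ∂P ≤ ∫⁻ ω, (ENNReal.ofReal (f ω) + ‖g ω‖ₑ) ∂P := lintegral_mono_ae hle
    _ = ∫⁻ ω, ENNReal.ofReal (f ω) ∂P + ∫⁻ ω, ‖g ω‖ₑ ∂P := lintegral_add_right' _ hg.1.enorm
    _ < ⊤ := ENNReal.add_lt_top.2 ⟨hfin, hg.2⟩

theorem integral_add_const_mul_mul {g η : Ω → ℝ} (hg : Integrable g P) (hη : Integrable η P)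
    (a l : ℝ) : ∫ ω, (g ω + a * (l * η ω)) ∂P = ∫ ω, g ω ∂P + a * l * ∫ ω, η ω ∂P := by
  rw [integral_add hg ((hη.const_mul l).const_mul a), integral_const_mul, integral_const_mul,
    mul_assoc]

end ExtendedExpectation

theorem measurable_indicator_Ioi_of_antitoneOn {g : ℝ → ℝ} {b : ℝ} (hg : AntitoneOn g (Ioi b)) :
    Measurable ((Ioi b).indicator g) := by
  let χ : ℝ → EReal := fun y => if b < y then (g y : EReal) else ⊤
  have hχ : Antitone χ := by
    intro y₁ y₂ h
    by_cases h₁ : b < y₁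
    · simp only [χ, if_pos h₁, if_pos (h₁.trans_le h)]
      exact EReal.coe_le_coe_iff.2 (hg h₁ (h₁.trans_le h) h)
    · simp [χ, h₁]
  convert hχ.measurable.ereal_toReal using 1
  ext y
  by_cases h : b < y <;> simp [χ, h, indicator]

def convexConjugate (u : ℝ → EReal) (y : ℝ) : EReal := ⨆ x : ℝ, (u x - ((x * y : ℝ) : EReal))

/-- Assumption (A1) of the paper; `u'` is the derivative of `u` on `(a, ∞)`. -/
structure IsInadaUtility (a : ℝ) (u : ℝ → EReal) (u' : ℝ → ℝ) : Prop where
  ne_top : ∀ x, u x ≠ ⊤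
  eq_bot_of_lt : ∀ x, x < a → u x = ⊥
  ne_bot_of_gt : ∀ x, a < x → u x ≠ ⊥
  monotone : Monotone u
  hasDerivAt : ∀ x, a < x → HasDerivAt (fun t => (u t).toReal) (u' x) x
  continuousOn_deriv : ContinuousOn u' (Ioi a)
  strictAntiOn_deriv : StrictAntiOn u' (Ioi a)
  tendsto_deriv_nhdsGT : Tendsto u' (𝓝[>] a) atTop
  tendsto_deriv_atTop : Tendsto u' atTop (𝓝 0)

namespace IsInadaUtility

variable {a : ℝ} {u : ℝ → EReal} {u' : ℝ → ℝ}

theorem exists_deriv_eq (hu : IsInadaUtility a u u') {y : ℝ} (hy : 0 < y) :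
    ∃ x, a < x ∧ u' x = y := by
  obtain ⟨x₁, hx₁y, hx₁a⟩ :=
    ((hu.tendsto_deriv_nhdsGT.eventually_ge_atTop y).and self_mem_nhdsWithin).exists
  obtain ⟨x₂, hx₂y, hx₁₂⟩ :=
    ((hu.tendsto_deriv_atTop.eventually_lt_const hy).and (eventually_ge_atTop x₁)).exists
  have hsub : Icc x₁ x₂ ⊆ Ioi a := fun w hw => hx₁a.trans_le hw.1
  obtain ⟨x, hx, hxy⟩ :=
    intermediate_value_Icc' hx₁₂ (hu.continuousOn_deriv.mono hsub) ⟨hx₂y.le, hx₁y⟩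
  exact ⟨x, hsub hx, hxy⟩

theorem coe_toReal (hu : IsInadaUtility a u u') {x : ℝ} (hx : a < x) :
    ((u x).toReal : EReal) = u x :=
  EReal.coe_toReal (hu.ne_top x) (hu.ne_bot_of_gt x hx)

theorem concaveOn (hu : IsInadaUtility a u u') : ConcaveOn ℝ (Ioi a) fun t => (u t).toReal := by
  refine AntitoneOn.concaveOn_of_deriv (convex_Ioi a)
    (fun x hx => (hu.hasDerivAt x hx).continuousAt.continuousWithinAt)
    (fun x hx => (hu.hasDerivAt x (by simpa using hx)).differentiableAt.differentiableWithinAt) ?_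
  rw [interior_Ioi]
  intro x hx y hy hxy
  rw [(hu.hasDerivAt x hx).deriv, (hu.hasDerivAt y hy).deriv]
  exact hu.strictAntiOn_deriv.antitoneOn hx hy hxy

theorem toReal_le_add_deriv_mul (hu : IsInadaUtility a u u') {x z : ℝ} (hx : a < x)
    (hz : a < z) : (u z).toReal ≤ (u x).toReal + u' x * (z - x) := by
  rcases lt_trichotomy x z with hxz | rfl | hzx
  · have h := hu.concaveOn.slope_le_of_hasDerivAt hx hz hxz (hu.hasDerivAt x hx)
    rw [slope_def_field, div_le_iff₀ (sub_pos.2 hxz)] at h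
    linarith
  · simp
  · have h := hu.concaveOn.le_slope_of_hasDerivAt hz hx hzx (hu.hasDerivAt x hx)
    rw [slope_def_field, le_div_iff₀ (sub_pos.2 hzx)] at h
    linarith

local notation "Φ" => convexConjugate u

theorem le_convexConjugate (hu : IsInadaUtility a u u') {x : ℝ} (hx : a < x)
    (y : ℝ) : (((u x).toReal - x * y : ℝ) : EReal) ≤ Φ y := by
  rw [convexConjugate, EReal.coe_sub, hu.coe_toReal hx]
  exact le_iSup (fun z => u z - ((z * y : ℝ) : EReal)) x

/-- At `z = a`, where `u` may be finite without being differentiable, the bound is the limit of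
the tangent-line bounds at `w ↓ z`. -/
theorem sub_mul_le_of_deriv_eq (hu : IsInadaUtility a u u') {x y : ℝ} (hx : a < x)
    (hxy : u' x = y) (z : ℝ) :
    u z - ((z * y : ℝ) : EReal) ≤ (((u x).toReal - x * y : ℝ) : EReal) := by
  rcases eq_or_ne (u z) ⊥ with hz | hz
  · simp [hz]
  have haz : a ≤ z := not_lt.1 fun h => hz (hu.eq_bot_of_lt z h)
  have hbound : ∀ w, z < w →
      (u z).toReal - z * y ≤ (u x).toReal - x * y + y * (w - z) := by
    intro w hzw
    have h₁ := EReal.toReal_le_toReal (hu.monotone hzw.le) hz (hu.ne_top w)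
    have h₂ := hu.toReal_le_add_deriv_mul hx (haz.trans_lt hzw)
    subst hxy
    linarith
  have hlim : Tendsto (fun w => (u x).toReal - x * y + y * (w - z)) (𝓝[>] z)
      (𝓝 ((u x).toReal - x * y)) :=
    tendsto_nhdsWithin_of_tendsto_nhds ((by fun_prop : Continuous _).tendsto' z _ (by simp))
  rw [← EReal.coe_toReal (hu.ne_top z) hz, ← EReal.coe_sub, EReal.coe_le_coe_iff]
  exact ge_of_tendsto hlim (eventually_nhdsWithin_of_forall hbound)

theorem convexConjugate_eq (hu : IsInadaUtility a u u') {x y : ℝ} (hx : a < x)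
    (hxy : u' x = y) : Φ y = (((u x).toReal - x * y : ℝ) : EReal) :=
  le_antisymm (iSup_le (hu.sub_mul_le_of_deriv_eq hx hxy)) (hu.le_convexConjugate hx y)

theorem convexConjugate_ne_bot (hu : IsInadaUtility a u u') (y : ℝ) : Φ y ≠ ⊥ :=
  ne_bot_of_le_ne_bot (EReal.coe_ne_bot _) (hu.le_convexConjugate (lt_add_one a) y)

theorem coe_toReal_convexConjugate (hu : IsInadaUtility a u u') {y : ℝ} (hy : 0 < y) :
    ((Φ y).toReal : EReal) = Φ y := by
  obtain ⟨x, hx, hxy⟩ := hu.exists_deriv_eq hy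
  rw [hu.convexConjugate_eq hx hxy, EReal.toReal_coe]

theorem strictAntiOn_convexConjugate_add_mul (hu : IsInadaUtility a u u') :
    StrictAntiOn (fun y => (Φ y).toReal + a * y) (Ioi 0) := by
  intro y₁ hy₁ y₂ hy₂ hlt
  obtain ⟨x, hx, hxy⟩ := hu.exists_deriv_eq hy₂
  have h₂ : (Φ y₂).toReal = (u x).toReal - x * y₂ := by
    rw [hu.convexConjugate_eq hx hxy, EReal.toReal_coe]
  have h₁ : (u x).toReal - x * y₁ ≤ (Φ y₁).toReal := by
    exact_mod_cast (hu.le_convexConjugate hx y₁).trans_eq (hu.coe_toReal_convexConjugate hy₁).symm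
  simp only
  linarith [mul_pos (sub_pos.2 hx) (sub_pos.2 hlt)]

theorem convexConjugate_mul_add_le (hu : IsInadaUtility a u u') {s t e : ℝ} (ht : 0 < t)
    (hts : t ≤ s) (he : 0 ≤ e) :
    (Φ (s * e)).toReal + a * (s * e) ≤ (Φ (t * e)).toReal + a * (t * e) := by
  rcases he.eq_or_lt with rfl | he
  · simp
  · exact hu.strictAntiOn_convexConjugate_add_mul.antitoneOn (mul_pos ht he)
      (mul_pos (ht.trans_le hts) he) (by gcongr)

variable {Ω : Type*} [MeasurableSpace Ω] {P : Measure Ω}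

theorem measurable_convexConjugate_comp (hu : IsInadaUtility a u u') {f : Ω → ℝ}
    (hf : Measurable f) (hf₀ : ∀ ω, 0 ≤ f ω) : Measurable fun ω => Φ (f ω) := by
  have hψ :=
    measurable_indicator_Ioi_of_antitoneOn hu.strictAntiOn_convexConjugate_add_mul.antitoneOn
  have hrepr : (fun ω => Φ (f ω)) = fun ω => if 0 < f ω then
      (((Ioi 0).indicator (fun y => (Φ y).toReal + a * y) (f ω) - a * f ω : ℝ) : EReal)
      else Φ 0 := by
    ext ω
    split_ifs with h
    · rw [indicator_of_mem (mem_Ioi.2 h), add_sub_cancel_right, hu.coe_toReal_convexConjugate h]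
    · rw [(hf₀ ω).antisymm' (not_lt.1 h)]
  rw [hrepr]
  exact Measurable.ite (measurableSet_lt measurable_const hf)
    ((hψ.comp hf).sub (hf.const_mul a)).coe_real_ereal measurable_const

theorem ae_convexConjugate_comp_eq_coe_toReal (hu : IsInadaUtility a u u') {f : Ω → ℝ}
    (hf : Measurable f) (hf₀ : ∀ ω, 0 ≤ f ω) (hfin : ∫⁻ ω, (Φ (f ω)).toENN ∂P < ⊤) :
    ∀ᵐ ω ∂P, Φ (f ω) = ((Φ (f ω)).toReal : EReal) := by
  filter_upwards [ae_ne_top_of_lintegral_toENN_lt_top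
    (hu.measurable_convexConjugate_comp hf hf₀) hfin] with ω hω
  exact (EReal.coe_toReal hω (hu.convexConjugate_ne_bot _)).symm

theorem integrable_convexConjugate_comp [IsFiniteMeasure P] (hu : IsInadaUtility a u u')
    {f : Ω → ℝ}    (hf : Measurable f) (hf₀ : ∀ ω, 0 ≤ f ω) (hfi : Integrable f P)
    (hfin : ∫⁻ ω, (Φ (f ω)).toENN ∂P < ⊤) : Integrable (fun ω => (Φ (f ω)).toReal) P := by
  refine integrable_of_ae_le_of_lintegral_ofReal_lt_top
    (hu.measurable_convexConjugate_comp hf hf₀).ereal_toReal.aestronglyMeasurable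
    ((integrable_const (u (a + 1)).toReal).sub (hfi.const_mul (a + 1))) ?_
    ((lintegral_mono fun ω => ?_).trans_lt hfin)
  · filter_upwards [hu.ae_convexConjugate_comp_eq_coe_toReal hf hf₀ hfin] with ω hω
    have := hu.le_convexConjugate (lt_add_one a) (f ω)
    rw [hω] at this
    exact_mod_cast this
  · unfold EReal.toENN
    split_ifs <;> simp

theorem ewp_convexConjugate_comp [IsFiniteMeasure P] (hu : IsInadaUtility a u u') {f : Ω → ℝ}
    (hf : Measurable f) (hf₀ : ∀ ω, 0 ≤ f ω) (hfi : Integrable f P)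
    (hfin : ∫⁻ ω, (Φ (f ω)).toENN ∂P < ⊤) :
    ewp P (fun ω => Φ (f ω)) = ∫ ω, (Φ (f ω)).toReal ∂P :=
  ewp_eq_integral (hu.ae_convexConjugate_comp_eq_coe_toReal hf hf₀ hfin)
    (hu.integrable_convexConjugate_comp hf hf₀ hfi hfin)

theorem integral_convexConjugate_mul_add_le (hu : IsInadaUtility a u u') {η : Ω → ℝ}
    (hη₀ : ∀ ω, 0 ≤ η ω) (hηi : Integrable η P) {s t : ℝ} (ht : 0 < t) (hts : t ≤ s)
    (hsi : Integrable (fun ω => (Φ (s * η ω)).toReal) P)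
    (hti : Integrable (fun ω => (Φ (t * η ω)).toReal) P) :
    ∫ ω, (Φ (s * η ω)).toReal ∂P + a * s * ∫ ω, η ω ∂P ≤
      ∫ ω, (Φ (t * η ω)).toReal ∂P + a * t * ∫ ω, η ω ∂P := by
  rw [← integral_add_const_mul_mul hsi hηi, ← integral_add_const_mul_mul hti hηi]
  exact integral_mono (hsi.add ((hηi.const_mul s).const_mul a))
    (hti.add ((hηi.const_mul t).const_mul a)) fun ω =>
      hu.convexConjugate_mul_add_le ht hts (hη₀ ω)

theorem integral_convexConjugate_mul_add_lt (hu : IsInadaUtility a u u') {η : Ω → ℝ}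
    (hη₀ : ∀ ω, 0 ≤ η ω) (hηi : Integrable η P) (hη : P {ω | 0 < η ω} ≠ 0) {s t : ℝ}
    (ht : 0 < t) (hts : t < s)
    (hsi : Integrable (fun ω => (Φ (s * η ω)).toReal) P)
    (hti : Integrable (fun ω => (Φ (t * η ω)).toReal) P) :
    ∫ ω, (Φ (s * η ω)).toReal ∂P + a * s * ∫ ω, η ω ∂P <
      ∫ ω, (Φ (t * η ω)).toReal ∂P + a * t * ∫ ω, η ω ∂P := by
  set F : ℝ → Ω → ℝ := fun l ω => (Φ (l * η ω)).toReal + a * (l * η ω)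
  have hFs : Integrable (F s) P := hsi.add ((hηi.const_mul s).const_mul a)
  have hFt : Integrable (F t) P := hti.add ((hηi.const_mul t).const_mul a)
  have hsupp : {ω | 0 < η ω} ⊆ Function.support fun ω => F t ω - F s ω := fun ω hω =>
    (sub_pos.2 (hu.strictAntiOn_convexConjugate_add_mul (mul_pos ht hω)
      (mul_pos (ht.trans hts) hω) (mul_lt_mul_of_pos_right hts hω))).ne'
  have hpos : 0 < ∫ ω, (F t ω - F s ω) ∂P :=
    (integral_pos_iff_support_of_nonneg
      (fun ω => sub_nonneg.2 (hu.convexConjugate_mul_add_le ht hts.le (hη₀ ω)))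
      (hFt.sub hFs)).2
      (pos_iff_ne_zero.2 fun h => hη (measure_mono_null hsupp h))
  rw [integral_sub hFt hFs, integral_add_const_mul_mul hti hηi,
    integral_add_const_mul_mul hsi hηi] at hpos
  linarith

end IsInadaUtility

theorem statement11_general
    {Ω : Type*} [MeasurableSpace Ω] (P : Measure Ω) [IsProbabilityMeasure P]
    (a : ℝ)
    (u : ℝ → EReal)
    (hu_ne_top : ∀ x : ℝ, u x ≠ ⊤)
    (hu_bot : ∀ x : ℝ, x < a → u x = ⊥)
    (hu_fin : ∀ x : ℝ, a < x → u x ≠ ⊥)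
    (hu_mono : Monotone u)
    (du : ℝ → ℝ)
    (hdu : ∀ x : ℝ, a < x → HasDerivAt (fun t : ℝ => (u t).toReal) (du x) x)
    (hdu_cont : ContinuousOn du (Ioi a))
    (hdu_anti : StrictAntiOn du (Ioi a))
    (hdu_inada_top : Tendsto du (𝓝[>] a) atTop)
    (hdu_inada_zero : Tendsto du atTop (𝓝 0))
    (Phi : ℝ → EReal)
    (hPhi : ∀ y : ℝ, Phi y = ⨆ x : ℝ, (u x - ((x * y : ℝ) : EReal)))
    (hA2 : ∀ g : Ω → ℝ, Measurable g → (∀ ω, 0 ≤ g ω) →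
      ∫⁻ ω, (Phi (g ω)).toENN ∂P < ⊤ →
      ∀ l : ℝ, 0 < l → ∫⁻ ω, (Phi (l * g ω)).toENN ∂P < ⊤)
    -- `η ∈ L_Φ` with `0 < E[η] ≤ 1`
    (eta : Ω → ℝ) (heta_meas : Measurable eta) (heta_nonneg : ∀ ω, 0 ≤ eta ω)
    (hetaPhi : ∫⁻ ω, (Phi (eta ω)).toENN ∂P < ⊤)
    (hmean_pos : 0 < ∫⁻ ω, ENNReal.ofReal (eta ω) ∂P)
    (hmean_le : ∫⁻ ω, ENNReal.ofReal (eta ω) ∂P ≤ 1)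
    (c : ℝ) :
    -- if `c ≤ a·E[η]` the infimum is not attained at any `λ > 0` …
    (c ≤ a * (∫⁻ ω, ENNReal.ofReal (eta ω) ∂P).toReal →
      ∀ t : ℝ, 0 < t → ∃ s : ℝ, 0 < s ∧
        ((s * c : ℝ) : EReal) + ewp P (fun ω => Phi (s * eta ω)) <
          ((t * c : ℝ) : EReal) + ewp P (fun ω => Phi (t * eta ω))) ∧
    -- … and if `c < a·E[η]` the infimum equals `-∞`
    (c < a * (∫⁻ ω, ENNReal.ofReal (eta ω) ∂P).toReal →
      ∀ M : ℝ, ∃ t : ℝ, 0 < t ∧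
        ((t * c : ℝ) : EReal) + ewp P (fun ω => Phi (t * eta ω)) < (M : EReal)) := by
  obtain rfl : Phi = convexConjugate u := funext hPhi
  have hu : IsInadaUtility a u du := ⟨hu_ne_top, hu_bot, hu_fin, hu_mono, hdu, hdu_cont,
    hdu_anti, hdu_inada_top, hdu_inada_zero⟩
  have hηi : Integrable eta P := ⟨heta_meas.aestronglyMeasurable,
    (hasFiniteIntegral_iff_ofReal (ae_of_all _ heta_nonneg)).2
      (hmean_le.trans_lt ENNReal.one_lt_top)⟩
  have hmean : (∫⁻ ω, ENNReal.ofReal (eta ω) ∂P).toReal = ∫ ω, eta ω ∂P :=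
    (integral_eq_lintegral_of_nonneg_ae (ae_of_all _ heta_nonneg)
      heta_meas.aestronglyMeasurable).symm
  have hη : P {ω | 0 < eta ω} ≠ 0 := by
    rw [lintegral_pos_iff_support heta_meas.ennreal_ofReal] at hmean_pos
    simpa [Function.support, ENNReal.ofReal_pos] using hmean_pos.ne'
  have hint := fun l (hl : 0 < l) => hu.integrable_convexConjugate_comp (heta_meas.const_mul l)
    (fun ω => mul_nonneg hl.le (heta_nonneg ω)) (hηi.const_mul l)
    (hA2 eta heta_meas heta_nonneg hetaPhi l hl)
  have hewp := fun l (hl : 0 < l) => hu.ewp_convexConjugate_comp (heta_meas.const_mul l)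
    (fun ω => mul_nonneg hl.le (heta_nonneg ω)) (hηi.const_mul l)
    (hA2 eta heta_meas heta_nonneg hetaPhi l hl)
  rw [hmean]
  refine ⟨fun hc t ht => ⟨2 * t, by positivity, ?_⟩, fun hc M => ?_⟩
  · have hlt := hu.integral_convexConjugate_mul_add_lt heta_nonneg hηi hη ht (by linarith)
      (hint (2 * t) (by positivity)) (hint t ht)
    rw [hewp _ (by positivity), hewp t ht, ← EReal.coe_add, ← EReal.coe_add,
      EReal.coe_lt_coe_iff]
    linarith [mul_le_mul_of_nonneg_left hc ht.le]
  · set m := ∫ ω, eta ω ∂P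
    set B := ∫ ω, (convexConjugate u (1 * eta ω)).toReal ∂P + a * 1 * m
    obtain ⟨s, hs⟩ := exists_gt (max 1 ((B - M) / (a * m - c)))
    rw [max_lt_iff, div_lt_iff₀ (sub_pos.2 hc)] at hs
    have hle := hu.integral_convexConjugate_mul_add_le heta_nonneg hηi one_pos hs.1.le
      (hint s (by linarith)) (hint 1 one_pos)
    refine ⟨s, by linarith, ?_⟩
    rw [hewp s (by linarith), ← EReal.coe_add, EReal.coe_lt_coe_iff]
    linarith

/-- Proposition 26, last part.  Assume (A1), (A2) and that `a ∈ (-∞, 0)`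
is finite.  Let `η ≥ 0` with `E[Φ(η)] < ∞` and `0 < E[η] ≤ 1`.  If `c ≤ a·E[η]`, then the
infimum `inf_{λ>0} {λc + E[Φ(λη)]}` is not attained at any `λ > 0`; moreover if
`c < a·E[η]`, the infimum equals `-∞`. -/
theorem statement11
    {Ω : Type*} [MeasurableSpace Ω] (P : Measure Ω) [IsProbabilityMeasure P]
    (a : ℝ) (ha : a < 0)
    (u : ℝ → EReal)
    (hu_ne_top : ∀ x : ℝ, u x ≠ ⊤)
    (hu_bot : ∀ x : ℝ, x < a → u x = ⊥)
    (hu_fin : ∀ x : ℝ, a < x → u x ≠ ⊥)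
    (hu_mono : Monotone u)
    (du : ℝ → ℝ)
    (hdu : ∀ x : ℝ, a < x → HasDerivAt (fun t : ℝ => (u t).toReal) (du x) x)
    (hdu_cont : ContinuousOn du (Ioi a))
    (hdu_pos : ∀ x : ℝ, a < x → 0 < du x)
    (hdu_anti : StrictAntiOn du (Ioi a))
    (hdu_inada_top : Tendsto du (𝓝[>] a) atTop)
    (hdu_inada_zero : Tendsto du atTop (𝓝 0))
    (Phi : ℝ → EReal)
    (hPhi : ∀ y : ℝ, Phi y = ⨆ x : ℝ, (u x - ((x * y : ℝ) : EReal)))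
    (hA2 : ∀ g : Ω → ℝ, Measurable g → (∀ ω, 0 ≤ g ω) →
      ∫⁻ ω, (Phi (g ω)).toENN ∂P < ⊤ →
      ∀ l : ℝ, 0 < l → ∫⁻ ω, (Phi (l * g ω)).toENN ∂P < ⊤)
    -- `η ∈ L_Φ` with `0 < E[η] ≤ 1`
    (eta : Ω → ℝ) (heta_meas : Measurable eta) (heta_nonneg : ∀ ω, 0 ≤ eta ω)
    (hetaPhi : ∫⁻ ω, (Phi (eta ω)).toENN ∂P < ⊤)
    (hmean_pos : 0 < ∫⁻ ω, ENNReal.ofReal (eta ω) ∂P)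
    (hmean_le : ∫⁻ ω, ENNReal.ofReal (eta ω) ∂P ≤ 1)
    (c : ℝ) :
    -- if `c ≤ a·E[η]` the infimum is not attained at any `λ > 0` …
    (c ≤ a * (∫⁻ ω, ENNReal.ofReal (eta ω) ∂P).toReal →
      ∀ t : ℝ, 0 < t → ∃ s : ℝ, 0 < s ∧
        ((s * c : ℝ) : EReal) + ewp P (fun ω => Phi (s * eta ω)) <
          ((t * c : ℝ) : EReal) + ewp P (fun ω => Phi (t * eta ω))) ∧
    -- … and if `c < a·E[η]` the infimum equals `-∞`
    (c < a * (∫⁻ ω, ENNReal.ofReal (eta ω) ∂P).toReal →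
      ∀ M : ℝ, ∃ t : ℝ, 0 < t ∧
        ((t * c : ℝ) : EReal) + ewp P (fun ω => Phi (t * eta ω)) < (M : EReal)) :=
  statement11_general P a u hu_ne_top hu_bot hu_fin hu_mono du hdu hdu_cont hdu_anti hdu_inada_top
    hdu_inada_zero Phi hPhi hA2 eta heta_meas heta_nonneg hetaPhi hmean_pos hmean_le c

end
end

section
/- Assume (A2), and let β := D⁻u(0) be the left derivative of u at 0. Then for every measurable f ≥ 0: E[Φ(f)·1_{{f ≥ β}}] < ∞ if and only if E[Φ(λf)·1_{{f ≥ β}}] < ∞ for every λ > 0. Consequently L^Φ̂(P) = M^Φ̂(P): for every measurable f ≥ 0, E[Φ̂(f)] < ∞ if and only if E[Φ̂(λf)] < ∞ for every λ > 0. -/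
/-!
The support line `u x ≤ u 0 + β * x` of the concave `u` at `0` gives `Φ(β) = u(0)`. Hence
`E[Φ(max f β)]` is finite as soon as `E[Φ(f)·1_{f ≥ β}]` is, (A2) applies to `max f β`, and
`Φ(λ f) = Φ(λ max f β)` on `{f ≥ β}`.

For `x ≤ 0` the term of `Φ̂(y)` at `-x` is the positive part of the term of `Φ(y) - u(0)` at `x`.
So `Φ̂(y) ≤ (Φ(y) - u(0))⁺` for `y ≥ 0`, with equality for `y ≥ β`, where the support line makes
the terms of `Φ(y)` at `x > 0` at most `u(0)`. Since `Φ̂` is monotone on `[0, ∞)`, this bounds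
`E[Φ̂(λ f)]` by `E[Φ(λ max f β)]` up to a constant, and `E[Φ(f)·1_{f ≥ β}]` by `E[Φ̂(f)]`.
-/

open MeasureTheory Filter Set Topology
open scoped ENNReal

noncomputable section

namespace EReal

theorem toENN_eq_toENNReal : EReal.toENN = EReal.toENNReal := rfl

theorem toENNReal_le_iff_le_coe {x : EReal} {q : ℝ≥0∞} : x.toENNReal ≤ q ↔ x ≤ q := by
  rw [← coe_ennreal_le_coe_ennreal_iff, coe_toENNReal_eq_max, max_le_iff]
  simp only [coe_ennreal_nonneg, true_and]

theorem toENNReal_le_toENNReal_sub_add (x : EReal) (c : ℝ) :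
    x.toENNReal ≤ (x - c).toENNReal + ENNReal.ofReal c := by
  simpa only [sub_add_cancel, real_coe_toENNReal] using toENNReal_add_le (x := x - c) (y := c)

theorem toENNReal_sub_le_add (x : EReal) (c : ℝ) :
    (x - c).toENNReal ≤ x.toENNReal + ENNReal.ofReal (-c) := by
  simpa only [sub_eq_add_neg, ← coe_neg, real_coe_toENNReal] using
    toENNReal_add_le (x := x) (y := ((-c : ℝ) : EReal))

theorem sub_coe_sub_coe (w : EReal) (r c : ℝ) : w - r - c = ((-r : ℝ) : EReal) - (c - w) := by
  induction w using EReal.rec with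
  | bot => simp
  | top => simp
  | coe w => norm_cast; ring

end EReal

theorem ConcaveOn.le_add_mul_sub_of_hasDerivWithinAt_Iio {S : Set ℝ} {f : ℝ → ℝ} {x y f' : ℝ}
    (hf : ConcaveOn ℝ S f) (hx : x ∈ S) (hy : y ∈ S) (hS : ∃ z ∈ S, z < x)
    (hf' : HasDerivWithinAt f f' (Iio x) x) : f y ≤ f x + f' * (y - x) := by
  rcases lt_trichotomy y x with hyx | rfl | hxy
  · have h := hf.le_slope_of_hasDerivWithinAt_Iio hy hx hyx hf'
    rw [slope_def_field, le_div_iff₀ (sub_pos.2 hyx)] at h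
    linarith
  · simp
  · obtain ⟨z, hz, hzx⟩ := hS
    have hslope : slope f x y ≤ f' := by
      refine ge_of_tendsto ((hasDerivWithinAt_iff_tendsto_slope' self_notMem_Iio).mp hf') ?_
      filter_upwards [Ioo_mem_nhdsLT hzx] with t ht
      exact hf.slope_anti hx ⟨hf.1.ordConnected.out hz hx (Ioo_subset_Icc_self ht), ht.2.ne⟩
        ⟨hy, hxy.ne'⟩ (ht.2.trans hxy).le
    rw [slope_def_field, div_le_iff₀ (sub_pos.2 hxy)] at hslope
    linarith

theorem concaveOn_toReal {a : EReal} {u : ℝ → EReal}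
    (hu_ne_top : ∀ x : ℝ, u x ≠ ⊤)
    (hu_conc : ∀ x y t : ℝ, a < (x : EReal) → a < (y : EReal) → 0 ≤ t → t ≤ 1 →
      ((t * (u x).toReal + (1 - t) * (u y).toReal : ℝ) : EReal) ≤ u (t * x + (1 - t) * y)) :
    ConcaveOn ℝ {x : ℝ | a < x} (fun x => (u x).toReal) := by
  refine ⟨(ordConnected_Ioi.preimage_mono EReal.coe_strictMono.monotone).convex,
    fun x hx y hy s t hs ht hst => ?_⟩
  obtain rfl : t = 1 - s := by linarith
  have h := EReal.toReal_le_toReal (hu_conc x y s hx hy hs (by linarith)) (EReal.coe_ne_bot _)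
    (hu_ne_top _)
  rwa [EReal.toReal_coe] at h

theorem le_coe_add_mul_of_hasDerivWithinAt_Iio {a : EReal} {u : ℝ → EReal} {β : ℝ} (ha : a < 0)
    (hu_ne_top : ∀ x : ℝ, u x ≠ ⊤)
    (hu_bot : ∀ x : ℝ, (x : EReal) < a → u x = ⊥)
    (hu_fin : ∀ x : ℝ, a < (x : EReal) → u x ≠ ⊥)
    (hu_mono : Monotone u)
    (hu_conc : ∀ x y t : ℝ, a < (x : EReal) → a < (y : EReal) → 0 ≤ t → t ≤ 1 →
      ((t * (u x).toReal + (1 - t) * (u y).toReal : ℝ) : EReal) ≤ u (t * x + (1 - t) * y))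
    (hβ : HasDerivWithinAt (fun x : ℝ => (u x).toReal) β (Iio 0) 0) (x : ℝ) :
    u x ≤ (((u 0).toReal + β * x : ℝ) : EReal) := by
  obtain ⟨a₀, haa₀, ha₀⟩ := EReal.exists_between_coe_real ha
  have hlt : ∀ x : ℝ, a < x → u x ≤ (((u 0).toReal + β * x : ℝ) : EReal) := fun x hx => by
    rw [← EReal.coe_toReal (hu_ne_top x) (hu_fin x hx), EReal.coe_le_coe_iff]
    simpa using (concaveOn_toReal hu_ne_top hu_conc).le_add_mul_sub_of_hasDerivWithinAt_Iio
      (show a < ((0 : ℝ) : EReal) from ha) hx ⟨a₀, haa₀, EReal.coe_lt_coe_iff.1 ha₀⟩ hβ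
  rcases lt_or_ge (x : EReal) a with hx | hx
  · rw [hu_bot x hx]
    exact bot_le
  · -- `x` may be the endpoint `a`, where concavity is not assumed: approach it from the right
    refine ge_of_tendsto
      (((continuous_coe_real_ereal.comp (continuous_const_add ((u 0).toReal) |>.comp
        (continuous_const_mul β))).tendsto x).mono_left (nhdsWithin_le_nhds (s := Ioi x)))
      (eventually_nhdsWithin_of_forall fun x' (hx' : x < x') => ?_)
    exact (hu_mono hx'.le).trans (hlt x' (hx.trans_lt (EReal.coe_lt_coe_iff.2 hx')))

def convexConj (u : ℝ → EReal) (y : ℝ) : EReal := ⨆ x : ℝ, (u x - ((x * y : ℝ) : EReal))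

def youngFn (u : ℝ → EReal) (x : ℝ) : ℝ≥0∞ := (u 0 - u (-|x|)).toENNReal

def youngConj (v : ℝ → ℝ≥0∞) (y : ℝ) : ℝ≥0∞ := ⨆ x : ℝ, (ENNReal.ofReal (x * y) - v x)

theorem convexConj_le_of_le_coe_add_mul {u : ℝ → EReal} {c β : ℝ}
    (h : ∀ x, u x ≤ ((c + β * x : ℝ) : EReal)) : convexConj u β ≤ c :=
  iSup_le fun x => (EReal.sub_le_sub (h x) le_rfl).trans_eq (by norm_cast; ring_nf)

theorem youngConj_monotoneOn (v : ℝ → ℝ≥0∞) : MonotoneOn (youngConj v) (Ici 0) := by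
  intro y₁ hy₁ y₂ _ h
  refine iSup_mono fun x => ?_
  rcases le_or_gt 0 x with hx | hx
  · gcongr
  · rw [ENNReal.ofReal_of_nonpos (mul_nonpos_of_nonpos_of_nonneg hx.le hy₁), zero_tsub]
    exact zero_le

section
variable {u : ℝ → EReal} {c : ℝ}

theorem toENNReal_sub_sub_eq_youngFn (hu_mono : Monotone u) (hc : u 0 = c) {z : ℝ} (hz : z ≤ 0)
    (y : ℝ) :
    (u z - ((z * y : ℝ) : EReal) - u 0).toENNReal = ENNReal.ofReal (-z * y) - youngFn u (-z) := by
  have hle : 0 ≤ (c : EReal) - u z :=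
    (EReal.sub_nonneg (Or.inl (EReal.coe_ne_top c)) (Or.inl (EReal.coe_ne_bot c))).2
      (hc ▸ hu_mono hz)
  rw [hc, EReal.sub_coe_sub_coe, EReal.toENNReal_sub hle, youngFn, abs_neg, abs_of_nonpos hz,
    neg_neg, hc, EReal.real_coe_toENNReal, neg_mul]

theorem youngConj_youngFn_le (hu_mono : Monotone u) (hc : u 0 = c) {y : ℝ} (hy : 0 ≤ y) :
    youngConj (youngFn u) y ≤ (convexConj u y - u 0).toENNReal := by
  refine iSup_le fun x => ?_
  calc ENNReal.ofReal (x * y) - youngFn u x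
      ≤ ENNReal.ofReal (-(-|x|) * y) - youngFn u (-(-|x|)) := by
        rw [neg_neg, youngFn, youngFn, abs_abs]
        gcongr
        exact le_abs_self x
    _ = (u (-|x|) - ((-|x| * y : ℝ) : EReal) - u 0).toENNReal :=
        (toENNReal_sub_sub_eq_youngFn hu_mono hc (neg_nonpos.2 (abs_nonneg x)) y).symm
    _ ≤ (convexConj u y - u 0).toENNReal :=
        EReal.toENNReal_le_toENNReal
          (EReal.sub_le_sub (le_iSup (fun z => u z - ((z * y : ℝ) : EReal)) _) le_rfl)

theorem toENNReal_convexConj_sub_le_youngConj (hu_mono : Monotone u) (hc : u 0 = c) {β : ℝ}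
    (hsupp : ∀ x, u x ≤ ((c + β * x : ℝ) : EReal)) {y : ℝ} (hy : β ≤ y) :
    (convexConj u y - u 0).toENNReal ≤ youngConj (youngFn u) y := by
  rw [EReal.toENNReal_le_iff_le_coe, hc]
  refine EReal.sub_le_of_le_add (iSup_le fun z => ?_)
  rw [← EReal.sub_le_iff_le_add (.inl (EReal.coe_ne_bot c)) (.inl (EReal.coe_ne_top c)),
    ← EReal.toENNReal_le_iff_le_coe, ← hc]
  rcases le_or_gt z 0 with hz | hz
  · rw [toENNReal_sub_sub_eq_youngFn hu_mono hc hz]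
    exact le_iSup (fun x => ENNReal.ofReal (x * y) - youngFn u x) (-z)
  · refine (EReal.toENNReal_of_nonpos ?_).trans_le zero_le
    calc u z - ((z * y : ℝ) : EReal) - u 0
        ≤ ((c + β * z : ℝ) : EReal) - ((z * y : ℝ) : EReal) - c :=
          hc ▸ EReal.sub_le_sub (EReal.sub_le_sub (hsupp z) le_rfl) le_rfl
      _ = ((β - y) * z : ℝ) := by norm_cast; ring
      _ ≤ 0 := EReal.coe_nonpos.2 (mul_nonpos_of_nonpos_of_nonneg (sub_nonpos.2 hy) hz.le)

theorem toENNReal_convexConj_le_youngConj_add (hu_mono : Monotone u) (hc : u 0 = c) {β : ℝ}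
    (hsupp : ∀ x, u x ≤ ((c + β * x : ℝ) : EReal)) {y : ℝ} (hy : β ≤ y) :
    (convexConj u y).toENNReal ≤ youngConj (youngFn u) y + ENNReal.ofReal c :=
  (EReal.toENNReal_le_toENNReal_sub_add _ c).trans
    (add_le_add_left (hc ▸ toENNReal_convexConj_sub_le_youngConj hu_mono hc hsupp hy) _)

theorem youngConj_youngFn_le_toENNReal_add (hu_mono : Monotone u) (hc : u 0 = c) {y : ℝ}
    (hy : 0 ≤ y) : youngConj (youngFn u) y ≤ (convexConj u y).toENNReal + ENNReal.ofReal (-c) :=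
  (youngConj_youngFn_le hu_mono hc hy).trans (hc ▸ EReal.toENNReal_sub_le_add _ c)

end

theorem lintegral_lt_top_of_le_add_const {α : Type*} [MeasurableSpace α] {μ : Measure α}
    [IsFiniteMeasure μ] {f g : α → ℝ≥0∞} {C : ℝ≥0∞} (hC : C ≠ ⊤) (hfg : ∀ x, f x ≤ g x + C)
    (hg : ∫⁻ x, g x ∂μ < ⊤) : ∫⁻ x, f x ∂μ < ⊤ :=
  calc ∫⁻ x, f x ∂μ ≤ ∫⁻ x, g x + C ∂μ := lintegral_mono hfg
    _ = ∫⁻ x, g x ∂μ + C * μ univ := by rw [lintegral_add_right _ measurable_const, lintegral_const]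
    _ < ⊤ := ENNReal.add_lt_top.2 ⟨hg, ENNReal.mul_lt_top hC.lt_top (measure_lt_top μ univ)⟩

theorem lintegral_toENNReal_comp_max_lt_top {α : Type*} [MeasurableSpace α] {μ : Measure α}
    [IsFiniteMeasure μ] {Φ : ℝ → EReal} {β : ℝ} (hβ : Φ β ≠ ⊤) {f : α → ℝ}
    (hf : ∫⁻ x, (if β ≤ f x then (Φ (f x)).toENNReal else 0) ∂μ < ⊤) :
    ∫⁻ x, (Φ (max (f x) β)).toENNReal ∂μ < ⊤ := by
  refine lintegral_lt_top_of_le_add_const (EReal.toENNReal_ne_top_iff.2 hβ) (fun x => ?_) hf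
  split_ifs with h
  · rw [max_eq_left h]
    exact le_self_add
  · rw [max_eq_right (le_of_not_ge h), zero_add]

theorem statement12_general
    {Ω : Type*} [MeasurableSpace Ω] (P : Measure Ω) [IsProbabilityMeasure P]
    (a : EReal) (ha : a < 0)
    (u : ℝ → EReal)
    (hu_ne_top : ∀ x : ℝ, u x ≠ ⊤)
    (hu_bot : ∀ x : ℝ, (x : EReal) < a → u x = ⊥)
    (hu_fin : ∀ x : ℝ, a < (x : EReal) → u x ≠ ⊥)
    (hu_mono : Monotone u)
    (hu_conc : ∀ x y t : ℝ, a < (x : EReal) → a < (y : EReal) → 0 ≤ t → t ≤ 1 →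
      ((t * (u x).toReal + (1 - t) * (u y).toReal : ℝ) : EReal) ≤ u (t * x + (1 - t) * y))
    -- the convex conjugate `Φ(y) = sup_x (u(x) - x·y)`
    (Phi : ℝ → EReal)
    (hPhi : ∀ y : ℝ, Phi y = ⨆ x : ℝ, (u x - ((x * y : ℝ) : EReal)))
    -- the Young function `û(x) = -u(-|x|) + u(0)` and its conjugate `Φ̂`
    (uhat : ℝ → ℝ≥0∞)
    (huhat : ∀ x : ℝ, uhat x = (u 0 - u (-|x|)).toENN)
    (Phat : ℝ → ℝ≥0∞)
    (hPhat : ∀ y : ℝ, Phat y = ⨆ x : ℝ, (ENNReal.ofReal (x * y) - uhat x))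
    -- (A2): `L_Φ = {g ≥ 0 : E[Φ(g)] < ∞}` is a cone
    (hA2 : ∀ g : Ω → ℝ, Measurable g → (∀ ω, 0 ≤ g ω) →
      ∫⁻ ω, (Phi (g ω)).toENN ∂P < ⊤ →
      ∀ l : ℝ, 0 < l → ∫⁻ ω, (Phi (l * g ω)).toENN ∂P < ⊤)
    -- `β` is the left derivative of `u` at `0`
    (β : ℝ)
    (hβ : HasDerivWithinAt (fun x : ℝ => (u x).toReal) β (Iio 0) 0) :
    (∀ f : Ω → ℝ, Measurable f → (∀ ω, 0 ≤ f ω) →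
      ((∫⁻ ω, (if β ≤ f ω then (Phi (f ω)).toENN else 0) ∂P < ⊤) ↔
        ∀ l : ℝ, 0 < l →
          ∫⁻ ω, (if β ≤ f ω then (Phi (l * f ω)).toENN else 0) ∂P < ⊤)) ∧
    (∀ f : Ω → ℝ, Measurable f → (∀ ω, 0 ≤ f ω) →
      ((∫⁻ ω, Phat (f ω) ∂P < ⊤) ↔
        ∀ l : ℝ, 0 < l → ∫⁻ ω, Phat (l * f ω) ∂P < ⊤)) := by
  obtain rfl : Phi = convexConj u := funext hPhi
  obtain rfl : uhat = youngFn u := funext huhat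
  obtain rfl : Phat = youngConj (youngFn u) := funext hPhat
  simp only [EReal.toENN_eq_toENNReal] at hA2 ⊢
  have hsupp := le_coe_add_mul_of_hasDerivWithinAt_Iio ha hu_ne_top hu_bot hu_fin hu_mono hu_conc hβ
  set c := (u 0).toReal
  have hc : u 0 = c := (EReal.coe_toReal (hu_ne_top 0) (hu_fin 0 (by exact_mod_cast ha))).symm
  have hcone : ∀ f : Ω → ℝ, Measurable f → (∀ ω, 0 ≤ f ω) →
      ∫⁻ ω, (if β ≤ f ω then (convexConj u (f ω)).toENNReal else 0) ∂P < ⊤ →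
      ∀ l : ℝ, 0 < l → ∫⁻ ω, (convexConj u (l * max (f ω) β)).toENNReal ∂P < ⊤ :=
    fun f hf hf0 H => hA2 _ (hf.max measurable_const) (fun ω => (hf0 ω).trans (le_max_left _ _))
      (lintegral_toENNReal_comp_max_lt_top
        (ne_top_of_le_ne_top (EReal.coe_ne_top c) (convexConj_le_of_le_coe_add_mul hsupp)) H)
  refine ⟨fun f hf hf0 => ⟨fun H l hl => ?_, fun H => by simpa using H 1 one_pos⟩,
    fun f hf hf0 => ⟨fun H l hl => ?_, fun H => by simpa using H 1 one_pos⟩⟩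
  · refine (lintegral_mono fun ω => ?_).trans_lt (hcone f hf hf0 H l hl)
    split_ifs with h
    · rw [max_eq_left h]
    · exact zero_le
  · have H₁ : ∫⁻ ω, (if β ≤ f ω then (convexConj u (f ω)).toENNReal else 0) ∂P < ⊤ := by
      refine lintegral_lt_top_of_le_add_const (ENNReal.ofReal_ne_top (r := c)) (fun ω => ?_) H
      split_ifs with h
      exacts [toENNReal_convexConj_le_youngConj_add hu_mono hc hsupp h, zero_le]
    refine lintegral_lt_top_of_le_add_const (ENNReal.ofReal_ne_top (r := -c)) (fun ω => ?_)
      (hcone f hf hf0 H₁ l hl)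
    have hmax : 0 ≤ l * max (f ω) β := mul_nonneg hl.le ((hf0 ω).trans (le_max_left _ _))
    exact (youngConj_monotoneOn _ (mul_nonneg hl.le (hf0 ω)) hmax
      (by gcongr; exact le_max_left _ _)).trans (youngConj_youngFn_le_toENNReal_add hu_mono hc hmax)

/-- Remark 24.  Assume (A2) and let `β := D⁻u(0)`.  Then for every
measurable `f ≥ 0`: `E[Φ(f)·1_{f ≥ β}] < ∞` iff `E[Φ(λf)·1_{f ≥ β}] < ∞` for every `λ > 0`.
Consequently `L^Φ̂(P) = M^Φ̂(P)`: for every measurable `f ≥ 0`, `E[Φ̂(f)] < ∞` iff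
`E[Φ̂(λf)] < ∞` for every `λ > 0`. -/
theorem statement12
    {Ω : Type*} [MeasurableSpace Ω] (P : Measure Ω) [IsProbabilityMeasure P]
    (a : EReal) (ha : a < 0)
    (u : ℝ → EReal)
    (hu_ne_top : ∀ x : ℝ, u x ≠ ⊤)
    (hu_bot : ∀ x : ℝ, (x : EReal) < a → u x = ⊥)
    (hu_fin : ∀ x : ℝ, a < (x : EReal) → u x ≠ ⊥)
    (hu_mono : Monotone u)
    (hu_conc : ∀ x y t : ℝ, a < (x : EReal) → a < (y : EReal) → 0 ≤ t → t ≤ 1 →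
      ((t * (u x).toReal + (1 - t) * (u y).toReal : ℝ) : EReal) ≤ u (t * x + (1 - t) * y))
    (hu_lim : Tendsto u atBot (𝓝 ⊥))
    -- the convex conjugate `Φ(y) = sup_x (u(x) - x·y)`
    (Phi : ℝ → EReal)
    (hPhi : ∀ y : ℝ, Phi y = ⨆ x : ℝ, (u x - ((x * y : ℝ) : EReal)))
    -- the Young function `û(x) = -u(-|x|) + u(0)` and its conjugate `Φ̂`
    (uhat : ℝ → ℝ≥0∞)
    (huhat : ∀ x : ℝ, uhat x = (u 0 - u (-|x|)).toENN)
    (Phat : ℝ → ℝ≥0∞)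
    (hPhat : ∀ y : ℝ, Phat y = ⨆ x : ℝ, (ENNReal.ofReal (x * y) - uhat x))
    -- (A2): `L_Φ = {g ≥ 0 : E[Φ(g)] < ∞}` is a cone
    (hA2 : ∀ g : Ω → ℝ, Measurable g → (∀ ω, 0 ≤ g ω) →
      ∫⁻ ω, (Phi (g ω)).toENN ∂P < ⊤ →
      ∀ l : ℝ, 0 < l → ∫⁻ ω, (Phi (l * g ω)).toENN ∂P < ⊤)
    -- `β` is the left derivative of `u` at `0`
    (β : ℝ)
    (hβ : HasDerivWithinAt (fun x : ℝ => (u x).toReal) β (Iio 0) 0) :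
    (∀ f : Ω → ℝ, Measurable f → (∀ ω, 0 ≤ f ω) →
      ((∫⁻ ω, (if β ≤ f ω then (Phi (f ω)).toENN else 0) ∂P < ⊤) ↔
        ∀ l : ℝ, 0 < l →
          ∫⁻ ω, (if β ≤ f ω then (Phi (l * f ω)).toENN else 0) ∂P < ⊤)) ∧
    (∀ f : Ω → ℝ, Measurable f → (∀ ω, 0 ≤ f ω) →
      ((∫⁻ ω, Phat (f ω) ∂P < ⊤) ↔
        ∀ l : ℝ, 0 < l → ∫⁻ ω, Phat (l * f ω) ∂P < ⊤)) :=
  statement12_general P a ha u hu_ne_top hu_bot hu_fin hu_mono hu_conc Phi hPhi uhat huhat Phat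
    hPhat hA2 β hβ

end
end
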